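/- arXiv:1711.01057 — 3 statements merged into one kernel-verified Lean document; each statement's English description precedes it below -/
import Mathlib

section
/- Let (W,S) be a right-angled Coxeter system, let w ∈ W and let r ∈ S. If ℓ(wr) > ℓ(w), then F#(wr) ≥ F#(w). -/
/-- A Coxeter matrix is *right-angled* if all of its off-diagonal entries are equal to `2`
or to `0` (where `0` encodes `∞`, i.e. no relation). -/
def CoxeterMatrix.IsRightAngled {B : Type*} (M : CoxeterMatrix B) : Prop :=
  ∀ i j : B, i ≠ j → M i j = 2 ∨ M i j = 0

/-- An element `w` of a Coxeter group is *firm* if there is a unique simple generator `r`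
with `ℓ(w r) < ℓ(w)`.  (This forces `ℓ(w) ≥ 1`.) -/
def CoxeterSystem.IsFirm {B W : Type*} [Group W] {M : CoxeterMatrix B}
    (cs : CoxeterSystem M W) (w : W) : Prop :=
  ∃! r : B, cs.length (w * cs.simple r) < cs.length w

/-- The *firmness* `F#(w)` of an element `w` of a Coxeter group: the largest `k` such that
`w` admits a reduced representation whose prefix of length `k` represents a firm element
(of length `k`, automatically).  By convention `F#(1) = 0` (the case `k = 0`). -/
noncomputable def CoxeterSystem.firmness {B W : Type*} [Group W] {M : CoxeterMatrix B}
    (cs : CoxeterSystem M W) (w : W) : ℕ :=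
  sSup {k | ∃ ω : List B, cs.IsReduced ω ∧ cs.wordProd ω = w ∧ k ≤ ω.length ∧
    (k = 0 ∨ cs.IsFirm (cs.wordProd (ω.take k)))}

/-! Appending `r` to a reduced word for `w` gives a reduced word for `w r`, and it leaves every
prefix of the original word, in particular a longest firm one, untouched. -/

namespace CoxeterSystem

variable {B W : Type*} [Group W] {M : CoxeterMatrix B} (cs : CoxeterSystem M W)

theorem IsReduced.append_singleton_of_length_lt {ω : List B} {r : B} (hω : cs.IsReduced ω)
    (hr : cs.length (cs.wordProd ω) < cs.length (cs.wordProd ω * cs.simple r)) :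
    cs.IsReduced (ω ++ [r]) := by
  have := cs.length_mul_simple (cs.wordProd ω) r
  unfold IsReduced at hω ⊢
  rw [cs.wordProd_append, cs.wordProd_singleton, List.length_append, List.length_singleton]
  omega

theorem bddAbove_firmness_set (w : W) :
    BddAbove {k | ∃ ω : List B, cs.IsReduced ω ∧ cs.wordProd ω = w ∧ k ≤ ω.length ∧
      (k = 0 ∨ cs.IsFirm (cs.wordProd (ω.take k)))} := by
  refine ⟨cs.length w, ?_⟩
  rintro k ⟨ω, hω, rfl, hk, -⟩
  exact hk.trans_eq hω.eq.symm

theorem exists_isReduced_firmness (w : W) :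
    ∃ ω : List B, cs.IsReduced ω ∧ cs.wordProd ω = w ∧ cs.firmness w ≤ ω.length ∧
      (cs.firmness w = 0 ∨ cs.IsFirm (cs.wordProd (ω.take (cs.firmness w)))) := by
  obtain ⟨ω, hω, rfl⟩ := cs.exists_isReduced w
  refine Nat.sSup_mem ?_ (cs.bddAbove_firmness_set _)
  exact ⟨0, ω, hω, rfl, Nat.zero_le _, Or.inl rfl⟩

theorem le_firmness {ω : List B} {k : ℕ} (hω : cs.IsReduced ω) (hk : k ≤ ω.length)
    (hfirm : k = 0 ∨ cs.IsFirm (cs.wordProd (ω.take k))) :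
    k ≤ cs.firmness (cs.wordProd ω) :=
  le_csSup (cs.bddAbove_firmness_set _) ⟨ω, hω, rfl, hk, hfirm⟩

end CoxeterSystem

theorem firmness_le_firmness_mul_simple_general {B W : Type*} [Group W] {M : CoxeterMatrix B}
    (cs : CoxeterSystem M W)
    (w : W) (r : B) (h : cs.length w < cs.length (w * cs.simple r)) :
    cs.firmness w ≤ cs.firmness (w * cs.simple r) := by
  obtain ⟨ω, hω, rfl, hk, hfirm⟩ := cs.exists_isReduced_firmness w
  have hωr : cs.IsReduced (ω ++ [r]) := hω.append_singleton_of_length_lt cs h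
  have hprefix : (ω ++ [r]).take (cs.firmness (cs.wordProd ω)) =
      ω.take (cs.firmness (cs.wordProd ω)) := List.take_append_of_le_length hk
  have hle := cs.le_firmness hωr (hk.trans (by simp)) (by rwa [hprefix])
  rwa [cs.wordProd_append, cs.wordProd_singleton] at hle

/-- Lemma 2.11(iii): if `ℓ(w r) > ℓ(w)` then `F#(w r) ≥ F#(w)`. -/
theorem firmness_le_firmness_mul_simple {B W : Type*} [Group W] {M : CoxeterMatrix B}
    (cs : CoxeterSystem M W) (hra : M.IsRightAngled)
    (w : W) (r : B) (h : cs.length w < cs.length (w * cs.simple r)) :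
    cs.firmness w ≤ cs.firmness (w * cs.simple r) :=
  firmness_le_firmness_mul_simple_general cs w r h
end

section
/- Let (W,S) be a right-angled Coxeter system with S finite and let b ∈ ℕ. Then there exists a positive integer f(b), depending only on b and on (W,S), with the following property: if (r₁, …, r_n) is a reduced increasing sequence in S such that every subsequence (r_{a₁}, …, r_{a_m}) with a₁ < a₂ < ⋯ < a_m and m(r_{a_i}, r_{a_{i+1}}) = ∞ for all i has at most b elements, then n ≤ f(b). -/
theorem List.length_le_card_mul_of_forall_count_le {α : Type*} [Fintype α] [DecidableEq α]
    {l : List α} {n : ℕ} (h : ∀ a, l.count a ≤ n) : l.length ≤ Fintype.card α * n :=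
  calc l.length = ∑ a ∈ l.toFinset, l.count a := (List.sum_toFinset_count_eq_length l).symm
    _ ≤ ∑ _a ∈ l.toFinset, n := Finset.sum_le_sum fun a _ => h a
    _ = l.toFinset.card * n := by rw [Finset.sum_const, smul_eq_mul]
    _ ≤ Fintype.card α * n := Nat.mul_le_mul_right _ l.toFinset.card_le_univ

namespace CoxeterSystem

variable {B W : Type*} [Group W] {M : CoxeterMatrix B} (cs : CoxeterSystem M W)

theorem commute_simple_of_M_eq_two {i j : B} (h : M i j = 2) :
    Commute (cs.simple i) (cs.simple j) := by
  have hsq : cs.simple i * cs.simple j * (cs.simple i * cs.simple j) = 1 := by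
    rw [← sq, ← h, simple_mul_simple_pow]
  calc cs.simple i * cs.simple j = (cs.simple i * cs.simple j)⁻¹ := eq_inv_of_mul_eq_one_left hsq
    _ = cs.simple j * cs.simple i := by rw [mul_inv_rev, inv_simple, inv_simple]

theorem wordProd_cons_append_cons_of_commute {s : B} {mid rest : List B}
    (h : ∀ t ∈ mid, Commute (cs.simple s) (cs.simple t)) :
    cs.wordProd (s :: mid ++ s :: rest) = cs.wordProd (mid ++ rest) := by
  have hc : Commute (cs.simple s) (cs.wordProd mid) :=
    Commute.list_prod_right _ _ (by simpa using h)
  rw [List.cons_append, wordProd_cons, wordProd_append, wordProd_cons, wordProd_append,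
    ← mul_assoc, hc.eq, mul_assoc, ← mul_assoc (cs.simple s), simple_mul_simple_self, one_mul]

theorem not_isReduced_cons_append_cons_of_commute {s : B} {mid rest : List B}
    (h : ∀ t ∈ mid, Commute (cs.simple s) (cs.simple t)) :
    ¬ cs.IsReduced (s :: mid ++ s :: rest) := by
  intro hred
  have hle := cs.length_wordProd_le (mid ++ rest)
  rw [← cs.wordProd_cons_append_cons_of_commute h, hred.eq] at hle
  simp at hle

theorem exists_M_eq_zero_of_isReduced_cons_append_cons (hra : M.IsRightAngled)
    {s : B} {mid rest : List B} (hred : cs.IsReduced (s :: mid ++ s :: rest)) :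
    ∃ t ∈ mid, M s t = 0 := by
  by_contra! hne
  refine cs.not_isReduced_cons_append_cons_of_commute (fun t ht => ?_) hred
  obtain rfl | hst := eq_or_ne s t
  · exact Commute.refl _
  · exact cs.commute_simple_of_M_eq_two ((hra s t hst).resolve_right (hne t ht))

/- The letters of `mid` are skipped by the chain; quantifying over them lets the induction run
over `ω` alone. -/
theorem exists_chain_cons_of_isReduced_cons_append [DecidableEq B] (hra : M.IsRightAngled)
    (s : B) (ω : List B) : ∀ mid : List B, cs.IsReduced (s :: mid ++ ω) →
    ∃ χ : List B, (s :: χ).Sublist (s :: mid ++ ω) ∧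
      (s :: χ).IsChain (fun x y => M x y = 0) ∧ 2 * ω.count s ≤ χ.length := by
  induction ω with
  | nil => exact fun _ _ => ⟨[], by simp, .singleton s, by simp⟩
  | cons x ω ih =>
    intro mid hred
    obtain rfl | hxs := eq_or_ne x s
    · obtain ⟨t, ht, hxt⟩ := cs.exists_M_eq_zero_of_isReduced_cons_append_cons hra hred
      have hred' : cs.IsReduced (x :: ω) := by simpa using hred.drop (mid.length + 1)
      obtain ⟨χ, hsub, hchain, hlen⟩ := ih [] hred'
      have htx : M t x = 0 := M.symmetric x t ▸ hxt
      refine ⟨t :: x :: χ, ?_, .cons_cons hxt (.cons_cons htx hchain), ?_⟩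
      · exact ((List.singleton_sublist.mpr ht).append hsub).cons_cons x
      · simp only [List.count_cons_self, List.length_cons]
        omega
    · obtain ⟨χ, hsub, hchain, hlen⟩ := ih (mid ++ [x]) (by simpa using hred)
      refine ⟨χ, by simpa using hsub, hchain, ?_⟩
      rwa [List.count_cons_of_ne hxs]

theorem exists_chain_of_isReduced [DecidableEq B] (hra : M.IsRightAngled) (s : B) {ω : List B}
    (hred : cs.IsReduced ω) :
    ∃ χ : List B, χ.Sublist ω ∧ χ.IsChain (fun x y => M x y = 0) ∧
      2 * ω.count s ≤ χ.length + 1 := by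
  induction ω with
  | nil => exact ⟨[], by simp, .nil, by simp⟩
  | cons x ω ih =>
    obtain rfl | hxs := eq_or_ne x s
    · obtain ⟨χ, hsub, hchain, hlen⟩ :=
        cs.exists_chain_cons_of_isReduced_cons_append hra x ω [] (by simpa using hred)
      refine ⟨x :: χ, by simpa using hsub, hchain, ?_⟩
      simp only [List.count_cons_self, List.length_cons]
      omega
    · obtain ⟨χ, hsub, hchain, hlen⟩ := ih (by simpa using hred.drop 1)
      refine ⟨χ, hsub.cons x, hchain, ?_⟩
      rwa [List.count_cons_of_ne hxs]

theorem isReduced_of_length_wordProd_take_lt {ω : List B}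
    (h : ∀ i < ω.length,
      cs.length (cs.wordProd (ω.take i)) < cs.length (cs.wordProd (ω.take (i + 1)))) :
    cs.IsReduced ω := by
  have hge : ∀ i ≤ ω.length, i ≤ cs.length (cs.wordProd (ω.take i)) := by
    intro i hi
    induction i with
    | zero => exact Nat.zero_le _
    | succ i ih => exact (ih (by omega)).trans_lt (h i (by omega))
  have := hge ω.length le_rfl
  rw [List.take_length] at this
  exact le_antisymm (cs.length_wordProd_le ω) this

end CoxeterSystem

/-- Lemma 2.17: if every "non-commuting chain" subsequence of a reduced increasing sequence
has at most `b` elements, then the length of the sequence is bounded by some `f b`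
depending only on `b` and on the Coxeter system. -/
theorem length_le_of_chains_bounded {B W : Type*} [Group W] [Fintype B] {M : CoxeterMatrix B}
    (cs : CoxeterSystem M W) (hra : M.IsRightAngled) (b : ℕ) :
    ∃ f : ℕ, 0 < f ∧ ∀ ω : List B,
      (∀ i < ω.length,
        cs.length (cs.wordProd (ω.take i)) < cs.length (cs.wordProd (ω.take (i + 1)))) →
      (∀ χ : List B, χ.Sublist ω → χ.Chain' (fun x y => M x y = 0) → χ.length ≤ b) →
      ω.length ≤ f := by
  classical
  refine ⟨Fintype.card B * (b + 1) + 1, Nat.succ_pos _, fun ω hinc hchains => ?_⟩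
  have hred := cs.isReduced_of_length_wordProd_take_lt hinc
  have hcount : ∀ s : B, ω.count s ≤ b + 1 := fun s => by
    obtain ⟨χ, hsub, hchain, hlen⟩ := cs.exists_chain_of_isReduced hra s hred
    have := hchains χ hsub hchain
    omega
  exact (List.length_le_card_mul_of_forall_count_le hcount).trans (Nat.le_succ _)
end

section
/- Let (W,S) be a right-angled Coxeter system and let n ∈ ℕ. Then {w ∈ W : F#(w) ≤ n} is the smallest subset of W containing the ball {w ∈ W : ℓ(w) ≤ n} and closed under squares; that is, {w : F#(w) ≤ n} contains the ball and is closed under squares, and every subset T ⊆ W that contains {w : ℓ(w) ≤ n} and is closed under squares contains {w : F#(w) ≤ n}. -/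
/-- A subset `T` of a right-angled Coxeter group is *closed under squares* if whenever
`w, ws, wt ∈ T` for distinct commuting generators `s, t` with `ℓ(ws) = ℓ(wt) = ℓ(w) + 1`,
also `wst ∈ T`. -/
def CoxeterSystem.ClosedUnderSquares {B W : Type*} [Group W] {M : CoxeterMatrix B}
    (cs : CoxeterSystem M W) (T : Set W) : Prop :=
  ∀ w ∈ T, ∀ s t : B, s ≠ t →
    cs.simple s * cs.simple t = cs.simple t * cs.simple s →
    cs.length (w * cs.simple s) = cs.length w + 1 →
    cs.length (w * cs.simple t) = cs.length w + 1 →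
    w * cs.simple s ∈ T → w * cs.simple t ∈ T →
    w * cs.simple s * cs.simple t ∈ T

/-!
In a right-angled Coxeter group two distinct right descents `i, j` of `w` commute, and
`ℓ(w s_i s_j) = ℓ(w) - 2`. So if `F#(w) ≤ n < ℓ(w)`, then `w` is not firm and is the fourth corner
of the square spanned by `w s_i s_j`, `w s_i`, `w s_j`; firmness is monotone in the right weak
order, so induction on length gives minimality.

For closure, let `v = w s_i s_j`, which has right descents `i` and `j`, and let `u ≤ v` be firm.
Following the reflection `v s_j v⁻¹` back along a reduced factorisation `v = u · x`, either it
deletes a letter of `x`, and then `u ≤ v s_j = w s_i`, or it equals `u s_c u⁻¹` for a right descent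
`c` of `u`. If this happens for both `j` and `i`, uniqueness of the descent of `u` forces
`s_i = s_j`.

The Coxeter-group facts used (the exchange condition, distinctness of the simple reflections,
reducedness of alternating words when `m(i, j) = ∞`) follow from Tits's action on reflections
with signs, a sign character, and the action of the infinite dihedral group on `ℤ`.
-/

theorem CoxeterMatrix.IsRightAngled.isLiftable {B G : Type*} [Group G] {M : CoxeterMatrix B}
    (hra : M.IsRightAngled) {f : B → G} (hf : ∀ i, f i * f i = 1)
    (hc : ∀ i j, M i j = 2 → f i * f j = f j * f i) : M.IsLiftable f := by
  intro i j
  rcases eq_or_ne i j with rfl | hij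
  · rw [M.diagonal, pow_one, hf]
  rcases hra i j hij with h2 | h0
  · rw [h2, sq, mul_assoc, ← mul_assoc (f j), ← hc i j h2, mul_assoc, hf, mul_one, hf]
  · rw [h0, pow_zero]

namespace CoxeterSystem

variable {B W : Type*} [Group W] {M : CoxeterMatrix B} (cs : CoxeterSystem M W)

local prefix:100 "s " => cs.simple
local prefix:100 "π " => cs.wordProd
local prefix:100 "ℓ " => cs.length
local prefix:100 "ris " => cs.rightInvSeq

theorem simple_mul_simple_comm_of_eq_two {i j : B} (h : M i j = 2) : s i * s j = s j * s i := by
  have h1 : (s i * s j) * (s i * s j) = 1 := by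
    rw [← sq, ← h, simple_mul_simple_pow]
  rw [← inv_eq_of_mul_eq_one_right h1, mul_inv_rev, inv_simple, inv_simple]

section WeakOrder

/-- The right weak order: `u ≤ v` iff some reduced word for `v` starts with a reduced word
for `u`. -/
def WeakLE (u v : W) : Prop := ℓ u + ℓ (u⁻¹ * v) = ℓ v

variable {cs}

theorem weakLE_refl (w : W) : cs.WeakLE w w := by
  simp [WeakLE]

theorem WeakLE.length_le {u v : W} (h : cs.WeakLE u v) : ℓ u ≤ ℓ v :=
  Nat.le.intro h

theorem WeakLE.trans {u v x : W} (huv : cs.WeakLE u v) (hvx : cs.WeakLE v x) :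
    cs.WeakLE u x := by
  have h₁ := cs.length_mul_le (u⁻¹ * v) (v⁻¹ * x)
  have h₂ := cs.length_mul_le u (u⁻¹ * x)
  simp only [mul_assoc, mul_inv_cancel_left] at h₁ h₂
  unfold WeakLE at *
  omega

theorem weakLE_mul_simple {w : W} {i : B} (h : cs.IsRightDescent w i) :
    cs.WeakLE (w * s i) w := by
  rw [WeakLE, mul_inv_rev, inv_simple, inv_mul_cancel_right, length_simple]
  exact cs.isRightDescent_iff.mp h

theorem IsReduced.weakLE_wordProd_take {ω : List B} (hω : cs.IsReduced ω) (k : ℕ) :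
    cs.WeakLE (π (ω.take k)) (π ω) := by
  have hsplit : (π (ω.take k))⁻¹ * π ω = π (ω.drop k) := by
    rw [inv_mul_eq_iff_eq_mul, ← wordProd_append, List.take_append_drop]
  rw [WeakLE, hsplit, (hω.take k).eq, (hω.drop k).eq, hω.eq, ← List.length_append,
    List.take_append_drop]

theorem WeakLE.exists_isReduced {u v : W} (h : cs.WeakLE u v) :
    ∃ ω, cs.IsReduced ω ∧ π ω = v ∧ π (ω.take (ℓ u)) = u := by
  obtain ⟨α, hα, rfl⟩ := cs.exists_isReduced u
  obtain ⟨β, hβ, hβ'⟩ := cs.exists_isReduced ((π α)⁻¹ * v)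
  have hαβ : π (α ++ β) = v := by rw [wordProd_append, ← hβ', mul_inv_cancel_left]
  refine ⟨α ++ β, ?_, hαβ, ?_⟩
  · rw [IsReduced, hαβ, List.length_append, ← hα.eq, ← hβ.eq, ← hβ']
    exact h.symm
  · rw [hα.eq, List.take_left]

theorem firmness_le_iff {w : W} {n : ℕ} :
    cs.firmness w ≤ n ↔ ∀ u, cs.IsFirm u → cs.WeakLE u w → ℓ u ≤ n := by
  rw [firmness, csSup_le_iff]
  · constructor
    · intro h u hu huw
      obtain ⟨ω, hω, rfl, hωu⟩ := huw.exists_isReduced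
      exact h _ ⟨ω, hω, rfl, hω.eq ▸ huw.length_le, .inr (by rwa [hωu])⟩
    · rintro h k ⟨ω, hω, rfl, hk, rfl | hfirm⟩
      · exact Nat.zero_le n
      · have hlen : ℓ (π (ω.take k)) = k := by
          rw [(hω.take k).eq, List.length_take, min_eq_left hk]
        exact hlen ▸ h _ hfirm (hω.weakLE_wordProd_take k)
  · refine ⟨ℓ w, ?_⟩
    rintro k ⟨ω, hω, rfl, hk, -⟩
    exact hω.eq ▸ hk
  · obtain ⟨ω, hω, rfl⟩ := cs.exists_isReduced w
    exact ⟨0, ω, hω, rfl, Nat.zero_le _, .inl rfl⟩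

theorem firmness_le_length (w : W) : cs.firmness w ≤ ℓ w :=
  firmness_le_iff.mpr fun _ _ h ↦ h.length_le

theorem IsFirm.length_le_firmness {u w : W} (hu : cs.IsFirm u) (h : cs.WeakLE u w) :
    ℓ u ≤ cs.firmness w :=
  firmness_le_iff.mp le_rfl u hu h

theorem WeakLE.firmness_le {u v : W} (h : cs.WeakLE u v) : cs.firmness u ≤ cs.firmness v :=
  firmness_le_iff.mpr fun _ hx hxu ↦ hx.length_le_firmness (hxu.trans h)

end WeakOrder

theorem simple_mul_mul_simple_eq_iff (i : B) (t u : W) :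
    s i * t * s i = u ↔ t = s i * u * s i := by
  constructor <;> rintro rfl <;> simp [mul_assoc]

section ParityRepresentation

variable [DecidableEq W]

/-- Tits's action of the simple reflection `s i` on pairs (reflection, sign): conjugate, and
flip the sign exactly when the reflection is `s i` itself. -/
def parityPerm (i : B) : Equiv.Perm (W × ZMod 2) :=
  Function.Involutive.toPerm (fun p ↦ (s i * p.1 * s i, p.2 + if p.1 = s i then 1 else 0)) <| by
    rintro ⟨t, e⟩
    have h2 : (2 : ZMod 2) = 0 := rfl
    simp only [simple_mul_mul_simple_eq_iff, simple_mul_simple_self, one_mul, Prod.mk.injEq]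
    refine ⟨by simp, ?_⟩
    split_ifs
    · linear_combination h2
    · ring

theorem parityPerm_apply (i : B) (t : W) (e : ZMod 2) :
    cs.parityPerm i (t, e) = (s i * t * s i, e + if t = s i then 1 else 0) :=
  rfl

theorem parityPerm_mul_self (i : B) : cs.parityPerm i * cs.parityPerm i = 1 :=
  Equiv.ext (Function.Involutive.toPerm_involutive _)

theorem parityPerm_mul_comm {i j : B} (h : s i * s j = s j * s i) :
    cs.parityPerm i * cs.parityPerm j = cs.parityPerm j * cs.parityPerm i := by
  ext ⟨t, e⟩ : 1
  have hji : s j * s i * s j = s i := by rw [← h, mul_assoc, simple_mul_simple_self, mul_one]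
  have hij : s i * s j * s i = s j := by rw [h, mul_assoc, simple_mul_simple_self, mul_one]
  simp only [Equiv.Perm.mul_apply, parityPerm_apply, Prod.mk.injEq]
  constructor
  · rw [show s i * (s j * t * s j) * s i = s i * s j * t * (s j * s i) by group,
      show s j * (s i * t * s i) * s j = s j * s i * t * (s i * s j) by group, h]
  · simp only [simple_mul_mul_simple_eq_iff, hij, hji]
    ring

def parityRep (hra : M.IsRightAngled) : W →* Equiv.Perm (W × ZMod 2) :=
  cs.lift ⟨cs.parityPerm, hra.isLiftable cs.parityPerm_mul_self
    fun _ _ h ↦ cs.parityPerm_mul_comm (cs.simple_mul_simple_comm_of_eq_two h)⟩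

theorem parityRep_wordProd (hra : M.IsRightAngled) (ω : List B) (t : W) (e : ZMod 2) :
    cs.parityRep hra (π ω) (t, e) = (π ω * t * (π ω)⁻¹, e + (ris ω).count t) := by
  induction ω with
  | nil => simp
  | cons i ω ih =>
    have hcond : π ω * t * (π ω)⁻¹ = s i ↔ (π ω)⁻¹ * s i * π ω = t := by
      constructor <;> intro h <;> rw [← h] <;> group
    rw [wordProd_cons, map_mul, Equiv.Perm.mul_apply, ih, parityRep, lift_apply_simple,
      parityPerm_apply, rightInvSeq, List.count_cons]
    simp only [mul_inv_rev, inv_simple, beq_iff_eq, hcond, Prod.mk.injEq]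
    refine ⟨by group, ?_⟩
    push_cast
    ring

theorem cast_count_rightInvSeq_eq (hra : M.IsRightAngled) {ω ω' : List B} (h : π ω = π ω') (t : W) :
    ((ris ω).count t : ZMod 2) = (ris ω').count t := by
  simpa [parityRep_wordProd] using congrArg (fun g ↦ (cs.parityRep hra g (t, 0)).2) h

end ParityRepresentation

theorem exists_wordProd_eraseIdx_eq_mul_simple (hra : M.IsRightAngled) {ω : List B} {j : B}
    (hj : cs.IsRightDescent (π ω) j) : ∃ k < ω.length, π (ω.eraseIdx k) = π ω * s j := by
  classical
  obtain ⟨τ, hτ, hτ'⟩ := cs.exists_isReduced (π ω * s j)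
  have hτj : π (τ.concat j) = π ω := by
    rw [wordProd_concat, ← hτ', simple_mul_simple_cancel_right]
  have hred : cs.IsReduced (τ.concat j) := by
    rw [IsReduced, hτj, List.length_concat, ← hτ.eq, ← hτ', cs.isRightDescent_iff.mp hj]
  have hcount : (ris (τ.concat j)).count (s j) = 1 :=
    List.count_eq_one_of_mem hred.nodup_rightInvSeq (by rw [rightInvSeq_concat]; simp)
  have hmem : s j ∈ ris ω := by
    rw [← List.count_pos_iff, Nat.pos_iff_ne_zero]
    intro h0
    have := cs.cast_count_rightInvSeq_eq hra hτj (s j)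
    rw [hcount, h0] at this
    exact absurd this (by decide)
  obtain ⟨k, hk, hkj⟩ := List.mem_iff_getElem.mp hmem
  refine ⟨k, by simpa using hk, ?_⟩
  rw [← wordProd_mul_getD_rightInvSeq, List.getD_eq_getElem _ _ hk, hkj]

theorem exists_deletion_of_isRightDescent_wordProd_append (hra : M.IsRightAngled) {ρ σ : List B} {j : B}
    (hj : cs.IsRightDescent (π (ρ ++ σ)) j) :
    (∃ ρ', ρ'.length + 1 = ρ.length ∧ π (ρ' ++ σ) = π (ρ ++ σ) * s j) ∨
      ∃ σ', σ'.length + 1 = σ.length ∧ π σ' = π σ * s j := by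
  obtain ⟨k, hk, hkj⟩ := cs.exists_wordProd_eraseIdx_eq_mul_simple hra hj
  rcases lt_or_ge k ρ.length with hkρ | hkρ
  · rw [List.eraseIdx_append_of_lt_length hkρ] at hkj
    exact .inl ⟨ρ.eraseIdx k, List.length_eraseIdx_add_one hkρ, hkj⟩
  · rw [List.eraseIdx_append_of_length_le hkρ, wordProd_append, wordProd_append, mul_assoc] at hkj
    rw [List.length_append] at hk
    exact .inr ⟨σ.eraseIdx (k - ρ.length), List.length_eraseIdx_add_one (by omega),
      mul_left_cancel hkj⟩

theorem simple_injective (hra : M.IsRightAngled) : Function.Injective cs.simple := by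
  classical
  intro i j hij
  by_contra hne
  let f : B → ℤˣ := fun k ↦ if k = i then -1 else 1
  have hf : M.IsLiftable f := hra.isLiftable (fun _ ↦ Int.units_mul_self _) fun _ _ _ ↦ mul_comm _ _
  have := congrArg (cs.lift ⟨f, hf⟩) hij
  simp [lift_apply_simple, f, Ne.symm hne] at this

section InfiniteDihedral

variable [DecidableEq B]

/-- `s i` and `s j` act on `ℤ` as the reflections in `-1/2` and `1/2`, the other generators
trivially; then `|g 0|` is a lower bound for the length of `g`. -/
def dihedralPerm (i j k : B) : Equiv.Perm ℤ :=
  if k = i then Equiv.subLeft (-1) else if k = j then Equiv.subLeft 1 else 1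

theorem dihedralPerm_mul_self (i j k : B) : dihedralPerm i j k * dihedralPerm i j k = 1 := by
  unfold dihedralPerm
  split_ifs <;> ext <;> simp

theorem natAbs_dihedralPerm_le (i j k : B) (x : ℤ) :
    (dihedralPerm i j k x).natAbs ≤ x.natAbs + 1 := by
  unfold dihedralPerm
  split_ifs <;> simp <;> omega

theorem isLiftable_dihedralPerm (hra : M.IsRightAngled) {i j : B} (h0 : M i j = 0) :
    M.IsLiftable (dihedralPerm i j) := by
  refine hra.isLiftable (dihedralPerm_mul_self i j) fun a b hab ↦ ?_
  have hpair : ¬(a = i ∧ b = j) ∧ ¬(a = j ∧ b = i) := by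
    constructor <;> rintro ⟨rfl, rfl⟩
    · simp [h0] at hab
    · rw [M.symmetric, h0] at hab
      simp at hab
  unfold dihedralPerm
  split_ifs <;> simp_all

end InfiniteDihedral

theorem isReduced_alternatingWord (hra : M.IsRightAngled) {i j : B} (hij : i ≠ j)
    (h0 : M i j = 0) (m : ℕ) : cs.IsReduced (alternatingWord i j m) := by
  classical
  let ρ := cs.lift ⟨dihedralPerm i j, isLiftable_dihedralPerm hra h0⟩
  have hle : ∀ ω : List B, (ρ (π ω) 0).natAbs ≤ ω.length := by
    intro ω
    induction ω with
    | nil => simp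
    | cons k ω ih =>
      rw [wordProd_cons, map_mul, Equiv.Perm.mul_apply, lift_apply_simple, List.length_cons]
      exact (natAbs_dihedralPerm_le i j k _).trans (by omega)
  have hval : ∀ m, ρ (π (alternatingWord i j m)) 0 = if Even m then -(m : ℤ) else m := by
    intro m
    induction m with
    | zero => simp [alternatingWord]
    | succ m ih =>
      rw [alternatingWord_succ', wordProd_cons, map_mul, Equiv.Perm.mul_apply, ih,
        lift_apply_simple]
      by_cases hm : Even m
      · simp [hm, Nat.even_add_one, dihedralPerm, hij.symm]
        ring
      · simp [hm, Nat.even_add_one, dihedralPerm]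
        ring
  obtain ⟨ω, hω, hωm⟩ := cs.exists_isReduced (π (alternatingWord i j m))
  have := hle ω
  rw [← hωm, hval] at this
  refine le_antisymm (cs.length_wordProd_le _) ?_
  rw [length_alternatingWord, hωm, hω.eq]
  split_ifs at this <;> simpa using this

theorem exists_isReduced_append_alternatingWord (hra : M.IsRightAngled) {z : W} {i j : B}
    (hij : i ≠ j) (h0 : M i j = 0) (hi : cs.IsRightDescent z i) (hj : cs.IsRightDescent z j)
    (m : ℕ) : ∃ ρ, cs.IsReduced (ρ ++ alternatingWord i j m) ∧ π (ρ ++ alternatingWord i j m) = z := by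
  induction m generalizing i j with
  | zero =>
    obtain ⟨ρ, hρ, rfl⟩ := cs.exists_isReduced z
    exact ⟨ρ, by simpa [alternatingWord] using hρ, by simp [alternatingWord]⟩
  | succ m ih =>
    obtain ⟨ρ, hρ, rfl⟩ := ih hij.symm (M.symmetric j i ▸ h0) hj hi
    rcases cs.exists_deletion_of_isRightDescent_wordProd_append hra hj with ⟨ρ', hρ', hπ⟩ | ⟨σ', hσ', hπ⟩
    · have hπ' : π (ρ' ++ alternatingWord i j (m + 1)) = π (ρ ++ alternatingWord j i m) := by
        rw [alternatingWord_succ, List.concat_eq_append, ← List.append_assoc, wordProd_append,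
          hπ, wordProd_singleton, simple_mul_simple_cancel_right]
      refine ⟨ρ', ?_, hπ'⟩
      rw [IsReduced, hπ', hρ.eq]
      simp only [List.length_append, length_alternatingWord]
      omega
    · have hσ : π σ' = π (alternatingWord i j (m + 1)) := by
        rw [hπ, alternatingWord_succ, wordProd_concat]
      have hlen := cs.length_wordProd_le σ'
      rw [hσ, (cs.isReduced_alternatingWord hra hij h0 _).eq, length_alternatingWord] at hlen
      rw [length_alternatingWord] at hσ'
      exfalso
      omega

theorem simple_mul_simple_comm_of_isRightDescent (hra : M.IsRightAngled) {z : W} {i j : B}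
    (hi : cs.IsRightDescent z i) (hj : cs.IsRightDescent z j) : s i * s j = s j * s i := by
  rcases eq_or_ne i j with rfl | hij
  · rfl
  rcases hra i j hij with h2 | h0
  · exact cs.simple_mul_simple_comm_of_eq_two h2
  obtain ⟨ρ, hρ, hπ⟩ := cs.exists_isReduced_append_alternatingWord hra hij h0 hi hj (ℓ z + 1)
  have := hρ.eq
  rw [hπ, List.length_append, length_alternatingWord] at this
  omega

variable {cs} in
theorem IsRightDescent.isRightDescent_mul_simple (hra : M.IsRightAngled) {z : W} {i j : B}
    (hij : i ≠ j) (hi : cs.IsRightDescent z i) (hj : cs.IsRightDescent z j) :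
    cs.IsRightDescent (z * s i) j := by
  obtain ⟨τ, hτ, hτ'⟩ := cs.exists_isReduced (z * s j)
  have hz : π (τ ++ [j]) = z := by
    rw [wordProd_append, wordProd_singleton, ← hτ', simple_mul_simple_cancel_right]
  rcases cs.exists_deletion_of_isRightDescent_wordProd_append hra (hz ▸ hi) with
    ⟨τ', hτ'', hπ⟩ | ⟨σ', hσ', hπ⟩
  · rw [hz, wordProd_append, wordProd_singleton] at hπ
    have hzij : z * s i * s j = π τ' := by rw [← hπ, simple_mul_simple_cancel_right]
    have := cs.length_wordProd_le τ'
    have hzi := cs.isRightDescent_iff.mp hi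
    have hzj := cs.isRightDescent_iff.mp hj
    rw [hτ', hτ.eq] at hzj
    rw [IsRightDescent, hzij]
    omega
  · obtain rfl : σ' = [] := List.length_eq_zero_iff.mp (by simpa using hσ')
    rw [wordProd_nil, wordProd_singleton, eq_comm, ← inv_eq_iff_mul_eq_one, inv_simple] at hπ
    exact absurd (cs.simple_injective hra hπ) hij.symm

variable {cs} in
theorem WeakLE.mul_simple_of_isLeftDescent {u v : W} {a : B} (huv : cs.WeakLE u v)
    (ha : cs.IsLeftDescent (u⁻¹ * v) a) :
    cs.WeakLE (u * s a) v ∧ cs.IsRightDescent (u * s a) a := by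
  have ha' := cs.isLeftDescent_iff.mp ha
  have hu₁ : (u * s a)⁻¹ * v = s a * (u⁻¹ * v) := by simp [mul_assoc]
  have hlen := cs.length_mul_le (u * s a) ((u * s a)⁻¹ * v)
  rw [mul_inv_cancel_left, hu₁] at hlen
  have hua := cs.length_mul_simple u a
  unfold WeakLE at huv ⊢
  unfold IsRightDescent
  rw [hu₁, simple_mul_simple_cancel_right]
  omega

variable {cs} in
theorem WeakLE.weakLE_mul_simple_or_exists_conj_eq (hra : M.IsRightAngled) {u v : W} {t : B}
    (huv : cs.WeakLE u v) (ht : cs.IsRightDescent v t) :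
    cs.WeakLE u (v * s t) ∨ ∃ c, cs.IsRightDescent u c ∧ u * s c * u⁻¹ = v * s t * v⁻¹ := by
  induction hm : ℓ (u⁻¹ * v) using Nat.strong_induction_on generalizing u with
  | _ m ih =>
  by_cases h1 : u⁻¹ * v = 1
  · obtain rfl : u = v := inv_mul_eq_one.mp h1
    exact .inr ⟨t, ht, rfl⟩
  obtain ⟨a, ha⟩ := cs.exists_leftDescent_of_ne_one h1
  obtain ⟨hu₁v, hdesc⟩ := huv.mul_simple_of_isLeftDescent ha
  have ha' := cs.isLeftDescent_iff.mp ha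
  have hu₁ : (u * s a)⁻¹ * v = s a * (u⁻¹ * v) := by simp [mul_assoc]
  rcases ih _ (by rw [← hm, hu₁]; omega) hu₁v rfl with h | ⟨c, hc, hconj⟩
  · have hu : cs.WeakLE u (u * s a) := by simpa using weakLE_mul_simple hdesc
    exact .inl (hu.trans h)
  by_cases hca : c = a
  · -- `v t = u c u⁻¹ v` is `v` with the first letter `c` of `u⁻¹ v` deleted
    subst hca
    have hconj' : u * s c * u⁻¹ = v * s t * v⁻¹ := by
      rw [← hconj, mul_inv_rev, inv_simple, simple_mul_simple_cancel_right, mul_assoc]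
    have hx : u⁻¹ * (v * s t) = s c * (u⁻¹ * v) := by
      rw [show v * s t = v * s t * v⁻¹ * v by group, ← hconj']
      group
    have := cs.isRightDescent_iff.mp ht
    unfold WeakLE at huv ⊢
    rw [hx]
    exact .inl (by omega)
  · refine .inr ⟨c, by simpa using hdesc.isRightDescent_mul_simple hra (Ne.symm hca) hc, ?_⟩
    rw [← hconj, mul_inv_rev, inv_simple]
    calc u * s c * u⁻¹ = u * (s c * s a) * (s a * u⁻¹) := by simp [mul_assoc]
      _ = u * s a * s c * (s a * u⁻¹) := by
        rw [cs.simple_mul_simple_comm_of_isRightDescent hra hc hdesc, ← mul_assoc u]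

theorem closedUnderSquares_setOf_firmness_le (hra : M.IsRightAngled) (n : ℕ) :
    cs.ClosedUnderSquares {w | cs.firmness w ≤ n} := by
  intro w _ i j hij hcomm hi hj hwi hwj
  have hwii : cs.IsRightDescent (w * s i) i := by
    unfold IsRightDescent; rw [simple_mul_simple_cancel_right]; omega
  have hvj : cs.IsRightDescent (w * s i * s j) j := by
    have : ¬cs.IsRightDescent (w * s i) j := fun h ↦ by
      have := hwii.isRightDescent_mul_simple hra hij h
      rw [IsRightDescent, simple_mul_simple_cancel_right] at this
      omega
    rw [cs.isRightDescent_iff, simple_mul_simple_cancel_right]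
    exact (cs.not_isRightDescent_iff.mp this).symm
  have hvi_eq : w * s i * s j * s i = w * s j := by
    rw [mul_assoc w, hcomm, ← mul_assoc, simple_mul_simple_cancel_right]
  have hvi : cs.IsRightDescent (w * s i * s j) i := by
    have := cs.isRightDescent_iff.mp hvj
    rw [simple_mul_simple_cancel_right] at this
    rw [IsRightDescent, hvi_eq]
    omega
  refine firmness_le_iff.mpr fun u hu huv ↦ ?_
  rcases huv.weakLE_mul_simple_or_exists_conj_eq hra hvj with h | ⟨c, hc, hc'⟩
  · rw [simple_mul_simple_cancel_right] at h
    exact (hu.length_le_firmness h).trans hwi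
  rcases huv.weakLE_mul_simple_or_exists_conj_eq hra hvi with h | ⟨d, hd, hd'⟩
  · rw [hvi_eq] at h
    exact (hu.length_le_firmness h).trans hwj
  obtain rfl : c = d := hu.unique hc hd
  have : s j = s i := mul_left_cancel (mul_right_cancel (hc'.symm.trans hd'))
  exact absurd (cs.simple_injective hra this) hij.symm

theorem setOf_firmness_le_subset (hra : M.IsRightAngled) {n : ℕ} {T : Set W}
    (hball : {w | ℓ w ≤ n} ⊆ T) (hT : cs.ClosedUnderSquares T) :
    {w | cs.firmness w ≤ n} ⊆ T := by
  intro w hw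
  induction hm : ℓ w using Nat.strong_induction_on generalizing w with
  | _ m ih =>
  by_cases hwn : ℓ w ≤ n
  · exact hball hwn
  have hnf : ¬cs.IsFirm w := fun hf ↦ hwn ((hf.length_le_firmness (weakLE_refl w)).trans hw)
  obtain ⟨i, hi⟩ := cs.exists_rightDescent_of_ne_one (w := w) (by rintro rfl; simp at hwn)
  obtain ⟨j, hj, hji⟩ : ∃ j, cs.IsRightDescent w j ∧ j ≠ i := by
    by_contra! h
    exact hnf ⟨i, hi, h⟩
  -- `w` closes the square spanned by `w' = w s i s j`, `w' s j = w s i` and `w' s i = w s j`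
  have hcomm := cs.simple_mul_simple_comm_of_isRightDescent hra hi hj
  have hwij := hi.isRightDescent_mul_simple hra hji.symm hj
  have hw'j : w * s i * s j * s j = w * s i := simple_mul_simple_cancel_right ..
  have hw'i : w * s i * s j * s i = w * s j := by
    rw [mul_assoc w, hcomm, ← mul_assoc, simple_mul_simple_cancel_right]
  have hw' : cs.WeakLE (w * s i * s j) w := (weakLE_mul_simple hwij).trans (weakLE_mul_simple hi)
  have hli := cs.isRightDescent_iff.mp hi
  have hlj := cs.isRightDescent_iff.mp hj
  have hlij := cs.isRightDescent_iff.mp hwij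
  have hmem : w * s i * s j ∈ T := ih _ (by omega) (hw'.firmness_le.trans hw) rfl
  have hmem_i : w * s i ∈ T :=
    ih (ℓ (w * s i)) (by omega) ((weakLE_mul_simple hi).firmness_le.trans hw) rfl
  have hmem_j : w * s j ∈ T :=
    ih (ℓ (w * s j)) (by omega) ((weakLE_mul_simple hj).firmness_le.trans hw) rfl
  have hsq := hT _ hmem j i hji hcomm.symm (by rw [hw'j]; omega) (by rw [hw'i]; omega)
    (by rwa [hw'j]) (by rwa [hw'i])
  rwa [hw'j, simple_mul_simple_cancel_right] at hsq

end CoxeterSystem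

/-- `{w : F#(w) ≤ n}` is the smallest subset of `W` containing the ball `{w : ℓ(w) ≤ n}`
and closed under squares. -/
theorem firmness_le_eq_square_closure_of_ball {B W : Type*} [Group W] {M : CoxeterMatrix B}
    (cs : CoxeterSystem M W) (hra : M.IsRightAngled) (n : ℕ) :
    {w : W | cs.length w ≤ n} ⊆ {w : W | cs.firmness w ≤ n} ∧
      cs.ClosedUnderSquares {w : W | cs.firmness w ≤ n} ∧
      ∀ T : Set W, {w : W | cs.length w ≤ n} ⊆ T → cs.ClosedUnderSquares T →
        {w : W | cs.firmness w ≤ n} ⊆ T :=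
  ⟨fun w hw ↦ (cs.firmness_le_length w).trans hw, cs.closedUnderSquares_setOf_firmness_le hra n,
    fun _ hball hT ↦ cs.setOf_firmness_le_subset hra hball hT⟩
end
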